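/- Let f : ℝ → ℝ be continuously differentiable and 2π-periodic, let M ≥ 0 satisfy |f′(x)| ≤ M for all x, and let x_0 ∈ ℝ satisfy f(x_0) = 0 and f(−x_0) = 0 (e.g. x_0 = 0 or x_0 = π). Let N ≥ 3, Ω ∈ ℝ, ω : Fin N → ℝ, and let φ^C : Fin (N−1) → ℝ satisfy the standard-coupling chain equations: Ω = ω_1 + f(−φ^C_1), Ω = ω_k + f(φ^C_{k−1}) + f(−φ^C_k) for 1 < k < N, and Ω = ω_N + f(φ^C_{N−1}). Let S = ∑_{j=1}^{N−1} φ^C_j, let Ψ = S − 2π·⌊S/(2π)⌋, and define φ^R_k = φ^C_k − (x_0 + Ψ)/(N−1) and ε = M·|x_0 + Ψ|/(N−1). Then |ω_1 + f(−φ^R_1) + f(−∑_{j=1}^{N−1} φ^R_j) − Ω| ≤ ε, |ω_k + f(φ^R_{k−1}) + f(−φ^R_k) − Ω| ≤ 2ε for all 1 < k < N, and |ω_N + f(φ^R_{N−1}) + f(∑_{j=1}^{N−1} φ^R_j) − Ω| ≤ ε. In particular, a locked chain state under standard coupling yields an approximate locked ring state whose residuals are O(1/N). -/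

import Mathlib

/-!
Shifting every chain phase by the same `δ = (x₀ + Ψ)/(N - 1)` moves each coupling term by at
most `M |δ| = ε`, since `f` is `M`-Lipschitz; this gives the residuals `ε` and `2ε` once the
chain equations are subtracted. The shift is chosen so that the phases close up:
`∑ φ^R = S - x₀ - Ψ = -x₀ + 2π ⌊S/2π⌋`, so by periodicity the two ring terms
`f (± ∑ φ^R)` equal `f (∓ x₀) = 0` and contribute nothing.
-/

open Finset

lemma abs_sub_le_mul_abs_sub_of_abs_deriv_le {f : ℝ → ℝ} {M : ℝ} (hf : Differentiable ℝ f)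
    (hM : ∀ x, |deriv f x| ≤ M) (a b : ℝ) : |f a - f b| ≤ M * |a - b| := by
  simpa only [Real.norm_eq_abs] using
    convex_univ.norm_image_sub_le_of_norm_deriv_le (fun x _ => hf x) (fun x _ => hM x)
      (Set.mem_univ b) (Set.mem_univ a)

lemma sum_sub_div_card {n : ℕ} (hn : n ≠ 0) (φ : Fin n → ℝ) (c : ℝ) :
    ∑ j, (φ j - c / n) = ∑ j, φ j - c := by
  rw [sum_sub_distrib, sum_const, card_univ, Fintype.card_fin, nsmul_eq_mul,
    mul_div_cancel₀ _ (Nat.cast_ne_zero.mpr hn)]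

lemma Function.Periodic.apply_sub_add_sub_floor_mul {f : ℝ → ℝ} {c : ℝ}
    (hf : Function.Periodic f c) (x S : ℝ) :
    f (S - (x + (S - c * ⌊S / c⌋))) = f (-x) ∧ f (-(S - (x + (S - c * ⌊S / c⌋)))) = f x := by
  constructor
  · rw [← hf.int_mul ⌊S / c⌋ (-x)]
    ring_nf
  · rw [← hf.sub_int_mul_eq (n := ⌊S / c⌋) (x := x)]
    ring_nf

/-- From a chain locked state under *standard* coupling, with `x_0` a zero
of `f` satisfying also `f(-x_0) = 0`, the shifted phases `φ^R_k = φ^C_k - (x_0 + Ψ)/(N-1)`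
give an approximate ring locked state whose residuals are `O(1/N)`.
(Indices are 0-based: oscillator `k` of the paper is index `k-1`.) -/
theorem chain_gives_approximate_ring_standard (f : ℝ → ℝ) (hf : ContDiff ℝ 1 f)
    (hper : Function.Periodic f (2 * Real.pi))
    (M : ℝ) (hM' : ∀ x, |deriv f x| ≤ M)
    (x0 : ℝ) (hx0 : f x0 = 0) (hx0' : f (-x0) = 0)
    (N : ℕ) (hN : 3 ≤ N) (Ω : ℝ) (ω : Fin N → ℝ) (φC : Fin (N - 1) → ℝ)
    (hfirst : Ω = ω ⟨0, by omega⟩ + f (-φC ⟨0, by omega⟩))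
    (hmid : ∀ k : ℕ, (h1 : 1 ≤ k) → (h2 : k ≤ N - 2) →
      Ω = ω ⟨k, by omega⟩ + f (φC ⟨k - 1, by omega⟩) + f (-φC ⟨k, by omega⟩))
    (hlast : Ω = ω ⟨N - 1, by omega⟩ + f (φC ⟨N - 2, by omega⟩))
    (S Ψ : ℝ) (hS : S = ∑ j, φC j)
    (hΨ : Ψ = S - 2 * Real.pi * (⌊S / (2 * Real.pi)⌋ : ℤ))
    (φR : Fin (N - 1) → ℝ) (hφR : ∀ k, φR k = φC k - (x0 + Ψ) / ((N : ℝ) - 1))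
    (ε : ℝ) (hε : ε = M * |x0 + Ψ| / ((N : ℝ) - 1)) :
    |ω ⟨0, by omega⟩ + f (-φR ⟨0, by omega⟩) + f (-∑ j, φR j) - Ω| ≤ ε ∧
    (∀ k : ℕ, (h1 : 1 ≤ k) → (h2 : k ≤ N - 2) →
      |ω ⟨k, by omega⟩ + f (φR ⟨k - 1, by omega⟩) + f (-φR ⟨k, by omega⟩) - Ω| ≤ 2 * ε) ∧
    |ω ⟨N - 1, by omega⟩ + f (φR ⟨N - 2, by omega⟩) + f (∑ j, φR j) - Ω| ≤ ε := by
  have hcast : ((N - 1 : ℕ) : ℝ) = (N : ℝ) - 1 := by rw [Nat.cast_sub (by omega), Nat.cast_one]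
  have hlip := abs_sub_le_mul_abs_sub_of_abs_deriv_le (hf.differentiable one_ne_zero) hM'
  have hshift : ∀ k, |f (φR k) - f (φC k)| ≤ ε ∧ |f (-φR k) - f (-φC k)| ≤ ε := by
    have hpos : (0 : ℝ) < (N : ℝ) - 1 := by rw [← hcast]; exact_mod_cast (by omega : 0 < N - 1)
    have hMδ : M * |(x0 + Ψ) / ((N : ℝ) - 1)| = ε := by
      rw [hε, abs_div, abs_of_pos hpos, mul_div_assoc]
    refine fun k => ⟨(hlip _ _).trans_eq ?_, (hlip _ _).trans_eq ?_⟩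
    · rw [abs_sub_comm, hφR, ← hMδ]; ring_nf
    · rw [hφR, ← hMδ]; ring_nf
  have hsum : ∑ j, φR j = S - (x0 + Ψ) := by
    rw [funext hφR, ← hcast, sum_sub_div_card (by omega), hS]
  obtain ⟨hclose, hclose_neg⟩ := hper.apply_sub_add_sub_floor_mul x0 S
  rw [← hΨ, ← hsum, hx0'] at hclose
  rw [← hΨ, ← hsum, hx0] at hclose_neg
  refine ⟨?_, fun k h1 h2 => ?_, ?_⟩
  · rw [hclose_neg, hfirst]
    convert (hshift ⟨0, by omega⟩).2 using 2
    ring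
  · calc _ = |(f (φR ⟨k - 1, by omega⟩) - f (φC ⟨k - 1, by omega⟩)) +
            (f (-φR ⟨k, by omega⟩) - f (-φC ⟨k, by omega⟩))| := by rw [hmid k h1 h2]; ring_nf
      _ ≤ ε + ε := (abs_add_le _ _).trans (add_le_add (hshift _).1 (hshift _).2)
      _ = 2 * ε := by ring
  · rw [hclose, hlast]
    convert (hshift ⟨N - 2, by omega⟩).1 using 2
    ring
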